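/- arXiv:2410.11784 — 2 statements merged into one kernel-verified Lean document; each statement's English description precedes it below -/
import Mathlib

section
/- Every Papadakis–Webster integer F has all of its decimal digits in the set {0, 1, 8, 9}. -/
/-!
Let `D` have the `n + 1` digits `a 0, …, a n` and let `R = rev D`. Subtracting `R` from `D`
digit by digit with borrows `β i`, the `i`-th digit of `E = D - R` is
`a i - a (n - i) + 10 β (i + 1) - β i`. Since `E` also has `n + 1` digits, reversing this
identity gives `rev E = R - D + 99 S`, where `S` is the number whose digits are the borrows in
reverse order; hence `F = E + rev E = 99 S` with every digit of `S` equal to `0` or `1`. In the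
long multiplication of such an `S` by `99 = 100 - 1` the carries stay in `{0, 1, 9, 10}`, and
the digits produced are `0`, `1`, `8` or `9`.
-/

/-- Digital reversal of a natural number (in base 10). -/
def rev (D : ℕ) : ℕ := Nat.ofDigits 10 ((Nat.digits 10 D).reverse)

/-- `F` is a Papadakis–Webster integer: `F = E + rev E` where `E = D - rev D`,
for some positive `D` with `D > rev D` such that `E` has the same number of
decimal digits as `D`. -/
def IsPWI (F : ℕ) : Prop :=
  ∃ D : ℕ, 0 < D ∧ rev D < D ∧
    (Nat.digits 10 (D - rev D)).length = (Nat.digits 10 D).length ∧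
    F = (D - rev D) + rev (D - rev D)

open Finset Nat

def digit (N i : ℕ) : ℕ := N / 10 ^ i % 10

def borrow (A B i : ℕ) : ℕ := if A % 10 ^ i < B % 10 ^ i then 1 else 0

-- Unlike `rev`, this keeps leading zeros: it reverses the string of the `n + 1` lowest digits.
def padRev (n N : ℕ) : ℕ := ∑ i ∈ range (n + 1), digit N (n - i) * 10 ^ i

def revBorrows (n A B : ℕ) : ℕ := ∑ i ∈ range (n + 1), borrow A B (n - i) * 10 ^ i

lemma digit_lt_ten (N i : ℕ) : digit N i < 10 := Nat.mod_lt _ (by norm_num)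

lemma borrow_le_one (A B i : ℕ) : borrow A B i ≤ 1 := by
  unfold borrow; split_ifs <;> omega

lemma mod_pow_succ_eq (N i : ℕ) : N % 10 ^ (i + 1) = N % 10 ^ i + 10 ^ i * digit N i := by
  rw [pow_succ, Nat.mod_mul]; rfl

lemma sum_digit_mul_pow (N k : ℕ) : ∑ i ∈ range k, digit N i * 10 ^ i = N % 10 ^ k := by
  induction k with
  | zero => simp [Nat.mod_one]
  | succ k ih => rw [sum_range_succ, ih, mod_pow_succ_eq, mul_comm (digit N k)]

lemma sum_range_succ_mul_ten_pow (c : ℕ → ℕ) (k : ℕ) :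
    ∑ j ∈ range (k + 1), c j * 10 ^ j = c 0 + 10 * ∑ j ∈ range k, c (j + 1) * 10 ^ j := by
  rw [sum_range_succ', mul_sum, add_comm]
  simp only [pow_succ, pow_zero, mul_one]
  congr 1
  exact sum_congr rfl fun j _ => by ring

lemma digit_add_ten_mul_zero {r : ℕ} (hr : r < 10) (X : ℕ) : digit (r + 10 * X) 0 = r := by
  simp only [digit, pow_zero, Nat.div_one]; omega

lemma digit_add_ten_mul_succ {r : ℕ} (hr : r < 10) (X i : ℕ) :
    digit (r + 10 * X) (i + 1) = digit X i := by
  unfold digit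
  rw [pow_succ', ← Nat.div_div_eq_div_mul]
  congr 2
  omega

lemma digit_sum_mul_pow {c : ℕ → ℕ} (hc : ∀ j, c j < 10) {i k : ℕ} (hik : i < k) :
    digit (∑ j ∈ range k, c j * 10 ^ j) i = c i := by
  obtain ⟨k, rfl⟩ := Nat.exists_eq_add_one_of_ne_zero (by omega : k ≠ 0)
  rw [sum_range_succ_mul_ten_pow]
  cases i with
  | zero => exact digit_add_ten_mul_zero (hc 0) _
  | succ i =>
    rw [digit_add_ten_mul_succ (hc 0)]
    exact digit_sum_mul_pow (fun j => hc (j + 1)) (by omega)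

lemma sub_mod_pow_add_mod {A B : ℕ} (hBA : B ≤ A) (i : ℕ) :
    (A - B) % 10 ^ i + B % 10 ^ i = A % 10 ^ i + borrow A B i * 10 ^ i := by
  have h := Nat.add_mod_eq_ite (m := A - B) (n := B) (k := 10 ^ i)
  rw [Nat.sub_add_cancel hBA] at h
  have h1 := Nat.mod_lt (A - B) (by positivity : 0 < 10 ^ i)
  have h2 := Nat.mod_lt B (by positivity : 0 < 10 ^ i)
  unfold borrow
  generalize 10 ^ i = m at *
  split_ifs at h ⊢ <;> omega

lemma digit_sub {A B : ℕ} (hBA : B ≤ A) (i : ℕ) :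
    (digit (A - B) i : ℤ) =
      digit A i - digit B i + 10 * borrow A B (i + 1) - borrow A B i := by
  refine mul_right_cancel₀ (pow_ne_zero i (by norm_num : (10 : ℤ) ≠ 0)) ?_
  have hE := mod_pow_succ_eq (A - B) i
  have hA := mod_pow_succ_eq A i
  have hB := mod_pow_succ_eq B i
  have hi := sub_mod_pow_add_mod hBA i
  have hi' := sub_mod_pow_add_mod hBA (i + 1)
  zify at hE hA hB hi hi'
  linear_combination hA - hB - hE - hi + hi'

lemma ofDigits_reverse_eq_sum (b : ℕ) (L : List ℕ) :
    ofDigits b L.reverse = ∑ i ∈ range L.length, L.getD (L.length - 1 - i) 0 * b ^ i := by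
  induction L with
  | nil => simp
  | cons d L ih =>
    rw [ofDigits_reverse_cons, ih, List.length_cons, sum_range_succ]
    congr 1
    · refine sum_congr rfl fun i hi => ?_
      obtain ⟨j, hj⟩ : ∃ j, L.length - i = j + 1 :=
        ⟨L.length - i - 1, by simp at hi; omega⟩
      rw [show L.length + 1 - 1 - i = j + 1 by omega, show L.length - 1 - i = j by omega]
      rfl
    · simp [mul_comm]

lemma rev_eq_padRev {n N : ℕ} (h : (digits 10 N).length = n + 1) : rev N = padRev n N := by
  rw [rev, ofDigits_reverse_eq_sum, h]
  refine sum_congr rfl fun i _ => ?_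
  rw [Nat.getD_digits _ _ (by norm_num), Nat.add_sub_cancel]
  rfl

lemma digit_padRev {i n : ℕ} (N : ℕ) (hi : i ≤ n) : digit (padRev n N) i = digit N (n - i) :=
  digit_sum_mul_pow (fun j => digit_lt_ten N (n - j)) (Nat.lt_succ_of_le hi)

lemma padRev_padRev {n N : ℕ} (hN : N < 10 ^ (n + 1)) : padRev n (padRev n N) = N := by
  calc padRev n (padRev n N) = ∑ i ∈ range (n + 1), digit N i * 10 ^ i :=
        sum_congr rfl fun i hi => by
          rw [digit_padRev N (Nat.sub_le n i), Nat.sub_sub_self (by simp at hi; omega)]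
    _ = N := by rw [sum_digit_mul_pow, Nat.mod_eq_of_lt hN]

lemma sum_reflect_borrow_diff_eq_ninety_nine_mul (n : ℕ) (b : ℕ → ℤ) (h0 : b 0 = 0)
    (hn : b (n + 1) = 0) :
    ∑ i ∈ range (n + 1), (10 * b (n - i + 1) - b (n - i)) * 10 ^ i =
      99 * ∑ i ∈ range (n + 1), b (n - i) * 10 ^ i := by
  have hlast :
      ∑ i ∈ range (n + 1), b (n - i) * 10 ^ i = ∑ i ∈ range n, b (n - i) * 10 ^ i := by
    rw [sum_range_succ, Nat.sub_self, h0, zero_mul, add_zero]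
  have hshift : ∑ i ∈ range (n + 1), 10 * b (n - i + 1) * 10 ^ i =
      100 * ∑ i ∈ range n, b (n - i) * 10 ^ i := by
    rw [sum_range_succ', mul_sum, Nat.sub_zero, hn, mul_zero, zero_mul, add_zero]
    refine sum_congr rfl fun i hi => ?_
    rw [show n - (i + 1) + 1 = n - i by simp at hi; omega]
    ring
  simp only [sub_mul, sum_sub_distrib, hshift, hlast]
  ring

lemma padRev_sub {n A B : ℕ} (hBA : B ≤ A) (hA : A < 10 ^ (n + 1)) :
    (padRev n (A - B) : ℤ) = padRev n A - padRev n B + 99 * revBorrows n A B := by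
  have h0 : borrow A B 0 = 0 := by simp [borrow, Nat.mod_one]
  have hn : borrow A B (n + 1) = 0 := by
    simp [borrow, Nat.mod_eq_of_lt hA, Nat.mod_eq_of_lt (hBA.trans_lt hA), hBA]
  have hsum := sum_reflect_borrow_diff_eq_ninety_nine_mul n (fun i => (borrow A B i : ℤ))
    (by simp [h0]) (by simp [hn])
  simp only [padRev, revBorrows]
  push_cast
  simp only [digit_sub hBA, add_sub_assoc, add_mul, sub_mul, sum_add_distrib, sum_sub_distrib]
  rw [← hsum]
  simp only [sub_mul, sum_sub_distrib]

lemma mem_digits_add_ten_mul {r y d : ℕ} (hr : r < 10) (hd : d ∈ digits 10 (r + 10 * y)) :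
    d = r ∨ d ∈ digits 10 y := by
  by_cases h : r ≠ 0 ∨ y ≠ 0
  · rwa [Nat.digits_add 10 (by norm_num) r y hr h, List.mem_cons] at hd
  · obtain ⟨rfl, rfl⟩ : r = 0 ∧ y = 0 := by tauto
    simp at hd

lemma mem_digits_ninety_nine_mul_sum {u : ℕ → ℕ} (hu : ∀ i, u i ≤ 1) (k : ℕ) {c : ℕ}
    (hc : c = 0 ∨ c = 1 ∨ c = 9 ∨ c = 10) :
    ∀ d ∈ digits 10 (99 * ∑ i ∈ range k, u i * 10 ^ i + c),
      d = 0 ∨ d = 1 ∨ d = 8 ∨ d = 9 := by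
  induction k generalizing u c with
  | zero => rcases hc with rfl | rfl | rfl | rfl <;> norm_num
  | succ k ih =>
    intro d hd
    have hu0 : u 0 = 0 ∨ u 0 = 1 := Nat.le_one_iff_eq_zero_or_eq_one.mp (hu 0)
    rw [sum_range_succ_mul_ten_pow] at hd
    set X := ∑ j ∈ range k, u (j + 1) * 10 ^ j
    rw [show 99 * (u 0 + 10 * X) + c =
        (99 * u 0 + c) % 10 + 10 * (99 * X + (99 * u 0 + c) / 10) by omega] at hd
    rcases mem_digits_add_ten_mul (Nat.mod_lt _ (by norm_num)) hd with rfl | hd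
    · rcases hu0 with h | h <;> rw [h] <;> omega
    · exact ih (fun j => hu (j + 1)) (by rcases hu0 with h | h <;> rw [h] <;> omega) d hd

lemma sub_rev_add_rev_eq {n D : ℕ} (hn : (digits 10 D).length = n + 1) (hlt : rev D < D)
    (hlen : (digits 10 (D - rev D)).length = n + 1) :
    D - rev D + rev (D - rev D) = 99 * revBorrows n D (rev D) := by
  have hD : D < 10 ^ (n + 1) := hn ▸ Nat.lt_base_pow_length_digits (by norm_num)
  have hsub := padRev_sub hlt.le hD
  have hrev : padRev n (rev D) = D := by rw [rev_eq_padRev hn, padRev_padRev hD]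
  rw [hrev, ← rev_eq_padRev hlen, ← rev_eq_padRev hn] at hsub
  omega

/-- every Papadakis–Webster integer has all of its decimal digits
in the set {0, 1, 8, 9}. -/
theorem stmt3 (F : ℕ) (hF : IsPWI F) :
    ∀ d ∈ Nat.digits 10 F, d = 0 ∨ d = 1 ∨ d = 8 ∨ d = 9 := by
  obtain ⟨D, hD, hlt, hlen, rfl⟩ := hF
  obtain ⟨n, hn⟩ : ∃ n, (digits 10 D).length = n + 1 :=
    Nat.exists_eq_add_one_of_ne_zero (by simp [Nat.digits_ne_nil_iff_ne_zero, hD.ne'])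
  rw [sub_rev_add_rev_eq hn hlt (hlen.trans hn), ← add_zero (99 * _)]
  exact mem_digits_ninety_nine_mul_sum (fun i => borrow_le_one _ _ _) (n + 1) (Or.inl rfl)
end

section
/- For all integers L ≥ 2 and K ≥ 2, let B = R_L·10^{L+K} + R_L where R_L = (10^L − 1)/9 is the length-L repunit, so that the decimal digit string of B is (1)_L (0)_K (1)_L (L ones, K zeros, L ones). Then the integer 99·B satisfies rev(99·B) = 9·(99·B); consequently 99·B and 10·99·B form a 2-cycle of the iterative digital reversal map. Likewise, for every L ≥ 2 the integer 99·R_L satisfies rev(99·R_L) = 9·(99·R_L). -/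
/-- The iterative digital reversal map: `D ↦ D - rev D` if `rev D < D`,
and `D ↦ D + rev D` if `rev D ≥ D`. -/
def IDR (D : ℕ) : ℕ := if rev D < D then D - rev D else D + rev D

/-- The length-`L` repunit `(10^L - 1)/9`, whose decimal expansion is `L` ones. -/
def repunit (L : ℕ) : ℕ := (10 ^ L - 1) / 9

theorem nine_mul_repunit_add_one (n : ℕ) : 9 * repunit n + 1 = 10 ^ n := by
  have hdvd : 9 ∣ 10 ^ n - 1 := by simpa using Nat.sub_dvd_pow_sub_pow 10 1 n
  rw [repunit, Nat.mul_div_cancel' hdvd, Nat.sub_add_cancel (Nat.one_le_pow _ _ (by norm_num))]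

theorem repunit_add_two (n : ℕ) : repunit (n + 2) = 100 * repunit n + 11 := by
  have h := nine_mul_repunit_add_one n
  have h2 := nine_mul_repunit_add_one (n + 2)
  rw [pow_add] at h2
  omega

theorem ofDigits_replicate_nine (n : ℕ) :
    Nat.ofDigits 10 (List.replicate n 9) = 9 * repunit n := by
  induction n with
  | zero => simp [repunit]
  | succ n ih =>
    have h := nine_mul_repunit_add_one n
    have h1 := nine_mul_repunit_add_one (n + 1)
    rw [pow_succ] at h1
    rw [List.replicate_succ, Nat.ofDigits_cons, ih]
    omega

theorem digits_ninetyNine_mul_repunit (n : ℕ) :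
    Nat.digits 10 (99 * repunit (n + 2)) = 9 :: 8 :: (List.replicate n 9 ++ [0, 1]) := by
  have hval : Nat.ofDigits 10 (9 :: 8 :: (List.replicate n 9 ++ [0, 1])) =
      99 * repunit (n + 2) := by
    simp only [Nat.ofDigits_append, ofDigits_replicate_nine, List.length_replicate,
      ← nine_mul_repunit_add_one n, repunit_add_two, Nat.ofDigits]
    ring
  rw [← hval, Nat.digits_ofDigits 10 (by norm_num)]
  · intro d hd
    simp only [List.mem_cons, List.mem_append, List.mem_replicate, List.not_mem_nil, or_false]
      at hd
    omega
  · simp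

theorem rev_ninetyNine_mul_repunit {L : ℕ} (hL : 2 ≤ L) :
    rev (99 * repunit L) = 9 * (99 * repunit L) := by
  obtain ⟨n, rfl⟩ := Nat.exists_eq_add_of_le' hL
  rw [rev, digits_ninetyNine_mul_repunit]
  simp only [List.reverse_cons, List.reverse_append, List.reverse_replicate, List.append_assoc,
    List.cons_append, List.nil_append, List.reverse_nil, Nat.ofDigits_append,
    ofDigits_replicate_nine, List.length_replicate, ← nine_mul_repunit_add_one n,
    repunit_add_two, Nat.ofDigits]
  ring

theorem length_digits_ninetyNine_mul_repunit {L : ℕ} (hL : 2 ≤ L) :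
    (Nat.digits 10 (99 * repunit L)).length = L + 2 := by
  obtain ⟨n, rfl⟩ := Nat.exists_eq_add_of_le' hL
  simp [digits_ninetyNine_mul_repunit]

theorem rev_add_ten_pow_mul_self (n k : ℕ) :
    rev (n + 10 ^ ((Nat.digits 10 n).length + k) * n) =
      rev n + 10 ^ ((Nat.digits 10 n).length + k) * rev n := by
  rcases Nat.eq_zero_or_pos n with rfl | hn
  · simp [rev]
  rw [rev, ← Nat.digits_append_zeroes_append_digits (by norm_num) hn]
  simp only [List.reverse_append, List.reverse_replicate, Nat.ofDigits_append,
    Nat.ofDigits_replicate_zero, List.length_reverse, List.length_replicate]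
  rw [← rev]
  ring

theorem rev_ten_mul (n : ℕ) : rev (10 * n) = rev n := by
  rcases Nat.eq_zero_or_pos n with rfl | hn
  · rfl
  rw [rev, Nat.digits_base_mul (by norm_num) hn, Nat.ofDigits_reverse_zero_cons, rev]

theorem IDR_eq_ten_mul_of_rev_eq {n : ℕ} (h : rev n = 9 * n) : IDR n = 10 * n := by
  rw [IDR, h, if_neg (by omega)]
  omega

theorem IDR_ten_mul_of_rev_eq {n : ℕ} (h : rev n = 9 * n) : IDR (10 * n) = n := by
  rw [IDR, rev_ten_mul, h]
  split_ifs <;> omega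

/-- for all `L, K ≥ 2`, with `B = R_L·10^{L+K} + R_L` (digit string
`(1)_L (0)_K (1)_L`), the integer `99·B` satisfies `rev (99·B) = 9·(99·B)`, so
`99·B` and `10·99·B` form a 2-cycle of IDR; likewise `rev (99·R_L) = 9·(99·R_L)`
for every `L ≥ 2`. -/
theorem stmt13 (L K : ℕ) (hL : 2 ≤ L) (hK : 2 ≤ K) :
    (rev (99 * (repunit L * 10 ^ (L + K) + repunit L)) =
        9 * (99 * (repunit L * 10 ^ (L + K) + repunit L)) ∧
      IDR (99 * (repunit L * 10 ^ (L + K) + repunit L)) =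
        10 * (99 * (repunit L * 10 ^ (L + K) + repunit L)) ∧
      IDR (10 * (99 * (repunit L * 10 ^ (L + K) + repunit L))) =
        99 * (repunit L * 10 ^ (L + K) + repunit L)) ∧
    rev (99 * repunit L) = 9 * (99 * repunit L) := by
  have hN := rev_ninetyNine_mul_repunit hL
  set N := 99 * repunit L
  have hB : 99 * (repunit L * 10 ^ (L + K) + repunit L) =
      N + 10 ^ ((Nat.digits 10 N).length + (K - 2)) * N := by
    rw [length_digits_ninetyNine_mul_repunit hL, show L + 2 + (K - 2) = L + K by omega]
    ring
  have hrevB : rev (99 * (repunit L * 10 ^ (L + K) + repunit L)) =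
      9 * (99 * (repunit L * 10 ^ (L + K) + repunit L)) := by
    rw [hB, rev_add_ten_pow_mul_self, hN]
    ring
  exact ⟨⟨hrevB, IDR_eq_ten_mul_of_rev_eq hrevB, IDR_ten_mul_of_rev_eq hrevB⟩, hN⟩
end
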